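/- arXiv:math/0211177 — 2 statements merged into one kernel-verified Lean document; each statement's English description precedes it below -/
import Mathlib

section
/- For 0 < t < 1 and real s > 0, the series Σ_{n≥1} [(n+t)^{-s} − (n−t)^{-s}] converges absolutely, and its limit as s → 0+ equals −2t. -/
open Filter Topology

/-- MVT bounds for `x ↦ x ^ (-s)`. -/
lemma mvt_rpow_bounds {a b s : ℝ} (ha : 0 < a) (hab : a < b) (hs : 0 < s) :
    s * (b - a) * b ^ (-s - 1) ≤ a ^ (-s) - b ^ (-s) ∧
    a ^ (-s) - b ^ (-s) ≤ s * (b - a) * a ^ (-s - 1) := by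
  have hb : 0 < b := ha.trans hab
  obtain ⟨c, hc, hcd⟩ := exists_hasDerivAt_eq_slope (fun x => x ^ (-s))
    (fun x => (-s) * x ^ (-s - 1)) hab
    (by
      apply ContinuousOn.rpow_const continuousOn_id
      intro x hx
      exact Or.inl (ne_of_gt (lt_of_lt_of_le ha hx.1)))
    (fun x hx => Real.hasDerivAt_rpow_const (Or.inl (ne_of_gt (ha.trans hx.1))))
  have hc0 : 0 < c := ha.trans hc.1
  have hba : b - a ≠ 0 := sub_ne_zero.2 (ne_of_gt hab)
  rw [eq_div_iff hba] at hcd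
  have key : a ^ (-s) - b ^ (-s) = s * (b - a) * c ^ (-s - 1) := by
    linear_combination hcd
  have h1 : c ^ (-s - 1) ≤ a ^ (-s - 1) :=
    Real.rpow_le_rpow_of_nonpos ha hc.1.le (by linarith)
  have h2 : b ^ (-s - 1) ≤ c ^ (-s - 1) :=
    Real.rpow_le_rpow_of_nonpos hc0 hc.2.le (by linarith)
  have hfac : 0 ≤ s * (b - a) := by nlinarith
  constructor
  · rw [key]; exact mul_le_mul_of_nonneg_left h2 hfac
  · rw [key]; exact mul_le_mul_of_nonneg_left h1 hfac

lemma summable_shift_rpow {a p : ℝ} (ha : 0 < a) (hp : 1 < p) :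
    Summable (fun n : ℕ => ((n : ℝ) + a) ^ (-p)) := by
  have h := (Real.summable_one_div_nat_add_rpow a p).2 hp
  refine h.congr fun n => ?_
  have hna : (0 : ℝ) < (n : ℝ) + a := by positivity
  rw [abs_of_pos hna, Real.rpow_neg hna.le, one_div]

lemma telescope_hasSum {a s : ℝ} (ha : 0 < a) (hs : 0 < s) :
    HasSum (fun n : ℕ => ((n : ℝ) + a) ^ (-s) - ((n : ℝ) + 1 + a) ^ (-s)) (a ^ (-s)) := by
  have hterm : ∀ n : ℕ, 0 ≤ ((n : ℝ) + a) ^ (-s) - ((n : ℝ) + 1 + a) ^ (-s) := by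
    intro n
    have h := Real.rpow_le_rpow_of_nonpos (by positivity : (0:ℝ) < (n : ℝ) + a)
      (by linarith : (n : ℝ) + a ≤ (n : ℝ) + 1 + a) (by linarith : -s ≤ 0)
    linarith
  rw [hasSum_iff_tendsto_nat_of_nonneg hterm]
  have hps : ∀ N : ℕ, ∑ n ∈ Finset.range N, (((n : ℝ) + a) ^ (-s) - ((n : ℝ) + 1 + a) ^ (-s))
      = a ^ (-s) - ((N : ℝ) + a) ^ (-s) := by
    intro N
    induction N with
    | zero => simp
    | succ k ih =>
        rw [Finset.sum_range_succ, ih]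
        push_cast
        ring
  have hlim : Tendsto (fun N : ℕ => ((N : ℝ) + a) ^ (-s)) atTop (𝓝 0) := by
    have h1 : Tendsto (fun N : ℕ => (N : ℝ) + a) atTop atTop :=
      tendsto_atTop_add_const_right _ a tendsto_natCast_atTop_atTop
    exact (tendsto_rpow_neg_atTop hs).comp h1
  simp only [hps]
  simpa using tendsto_const_nhds.sub hlim

/-- The key estimate: `a^{-s} ≤ s * Σ (n+a)^{-s-1} ≤ s * a^{-s-1} + a^{-s}`. -/
lemma sT_bounds {a s : ℝ} (ha : 0 < a) (hs : 0 < s) :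
    a ^ (-s) ≤ s * ∑' n : ℕ, ((n : ℝ) + a) ^ (-s - 1) ∧
    s * ∑' n : ℕ, ((n : ℝ) + a) ^ (-s - 1) ≤ s * a ^ (-s - 1) + a ^ (-s) := by
  have hp : (1 : ℝ) < s + 1 := by linarith
  have hsum : Summable (fun n : ℕ => ((n : ℝ) + a) ^ (-s - 1)) := by
    have := summable_shift_rpow ha hp
    refine this.congr fun n => ?_
    rw [show -s - 1 = -(s + 1) by ring]
  have htel := telescope_hasSum ha hs
  have hbnds : ∀ n : ℕ,
      s * ((n : ℝ) + 1 + a) ^ (-s - 1) ≤ ((n : ℝ) + a) ^ (-s) - ((n : ℝ) + 1 + a) ^ (-s) ∧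
      ((n : ℝ) + a) ^ (-s) - ((n : ℝ) + 1 + a) ^ (-s) ≤ s * ((n : ℝ) + a) ^ (-s - 1) := by
    intro n
    have hna : (0 : ℝ) < (n : ℝ) + a := by positivity
    have := mvt_rpow_bounds hna (by linarith : (n : ℝ) + a < (n : ℝ) + 1 + a) hs
    constructor
    · have h := this.1
      have he : (n : ℝ) + 1 + a - ((n : ℝ) + a) = 1 := by ring
      rw [he, mul_one] at h
      exact h
    · have h := this.2
      have he : (n : ℝ) + 1 + a - ((n : ℝ) + a) = 1 := by ring
      rw [he, mul_one] at h
      exact h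
  constructor
  · -- lower bound: telescoping sum ≤ termwise upper bound
    have h1 : a ^ (-s) ≤ ∑' n : ℕ, s * ((n : ℝ) + a) ^ (-s - 1) := by
      rw [← htel.tsum_eq]
      exact Summable.tsum_le_tsum (fun n => (hbnds n).2) htel.summable (hsum.mul_left s)
    rwa [tsum_mul_left] at h1
  · -- upper bound
    have hsum1 : Summable (fun n : ℕ => ((n : ℝ) + 1 + a) ^ (-s - 1)) := by
      have := summable_shift_rpow (by linarith : (0:ℝ) < 1 + a) hp
      refine this.congr fun n => ?_
      rw [show (n:ℝ) + 1 + a = (n:ℝ) + (1 + a) by ring, show -s - 1 = -(s + 1) by ring]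
    have h2 : ∑' n : ℕ, s * ((n : ℝ) + 1 + a) ^ (-s - 1) ≤ a ^ (-s) := by
      rw [← htel.tsum_eq]
      exact Summable.tsum_le_tsum (fun n => (hbnds n).1) (hsum1.mul_left s) htel.summable
    rw [tsum_mul_left] at h2
    -- shift: Σ_{n≥0} (n+a)^{-s-1} = a^{-s-1} + Σ_{n≥0} (n+1+a)^{-s-1}
    have hshift : ∑' n : ℕ, ((n : ℝ) + a) ^ (-s - 1)
        = a ^ (-s - 1) + ∑' n : ℕ, ((n : ℝ) + 1 + a) ^ (-s - 1) := by
      rw [Summable.tsum_eq_zero_add hsum]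
      congr 1
      · norm_num
      · refine tsum_congr fun n => ?_
        congr 1
        push_cast
        ring
    rw [hshift, mul_add]
    nlinarith [h2]

lemma tendsto_sT {a : ℝ} (ha : 0 < a) :
    Tendsto (fun s : ℝ => s * ∑' n : ℕ, ((n : ℝ) + a) ^ (-s - 1)) (𝓝[>] (0 : ℝ)) (𝓝 1) := by
  have hlow : Tendsto (fun s : ℝ => a ^ (-s)) (𝓝[>] (0 : ℝ)) (𝓝 1) := by
    have : ContinuousAt (fun s : ℝ => a ^ (-s)) 0 :=
      (Real.continuousAt_const_rpow (ne_of_gt ha)).comp (continuous_neg.continuousAt)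
    have h0 : a ^ (-(0:ℝ)) = 1 := by simp
    have := this.tendsto
    rw [h0] at this
    exact this.mono_left nhdsWithin_le_nhds
  have hup : Tendsto (fun s : ℝ => s * a ^ (-s - 1) + a ^ (-s)) (𝓝[>] (0 : ℝ)) (𝓝 1) := by
    have h1 : ContinuousAt (fun s : ℝ => a ^ (-s - 1)) 0 :=
      (Real.continuousAt_const_rpow (ne_of_gt ha)).comp
        ((continuous_neg.sub continuous_const).continuousAt)
    have h2 : Tendsto (fun s : ℝ => s * a ^ (-s - 1)) (𝓝 (0 : ℝ)) (𝓝 0) := by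
      have := (show ContinuousAt (fun s : ℝ => s * a ^ (-s - 1)) 0 from continuousAt_id.mul h1).tendsto
      simpa using this
    have h3 : Tendsto (fun s : ℝ => s * a ^ (-s - 1) + a ^ (-s)) (𝓝 (0 : ℝ)) (𝓝 1) := by
      have h4 : ContinuousAt (fun s : ℝ => a ^ (-s)) 0 :=
        (Real.continuousAt_const_rpow (ne_of_gt ha)).comp (continuous_neg.continuousAt)
      have := h2.add h4.tendsto
      simpa using this
    exact h3.mono_left nhdsWithin_le_nhds
  refine tendsto_of_tendsto_of_tendsto_of_le_of_le' hlow hup ?_ ?_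
  · filter_upwards [self_mem_nhdsWithin] with s hs
    exact (sT_bounds ha hs).1
  · filter_upwards [self_mem_nhdsWithin] with s hs
    exact (sT_bounds ha hs).2

/-- For `0 < t < 1` and real `s > 0`, the series
`Σ_{n ≥ 1} [(n+t)^{-s} − (n−t)^{-s}]` converges absolutely, and its limit as `s → 0+`
equals `−2t`. -/
theorem eta_series_abs_convergent_and_limit (t : ℝ) (ht0 : 0 < t) (ht1 : t < 1) :
    (∀ s : ℝ, 0 < s →
      Summable (fun n : ℕ => |((n : ℝ) + 1 + t) ^ (-s) - ((n : ℝ) + 1 - t) ^ (-s)|)) ∧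
    Tendsto (fun s : ℝ => ∑' n : ℕ, (((n : ℝ) + 1 + t) ^ (-s) - ((n : ℝ) + 1 - t) ^ (-s)))
      (𝓝[>] (0 : ℝ)) (𝓝 (-2 * t)) := by
  have habs : ∀ n : ℕ, ∀ s : ℝ, 0 < s →
      |((n : ℝ) + 1 + t) ^ (-s) - ((n : ℝ) + 1 - t) ^ (-s)|
        = ((n : ℝ) + 1 - t) ^ (-s) - ((n : ℝ) + 1 + t) ^ (-s) := by
    intro n s hs
    have hpos : (0 : ℝ) < (n : ℝ) + 1 - t := by
      have : (0:ℝ) ≤ (n:ℝ) := Nat.cast_nonneg n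
      linarith
    have h := Real.rpow_le_rpow_of_nonpos hpos (by linarith : (n : ℝ) + 1 - t ≤ (n : ℝ) + 1 + t)
      (by linarith : -s ≤ 0)
    rw [abs_of_nonpos (by linarith)]
    ring
  have hmvt : ∀ n : ℕ, ∀ s : ℝ, 0 < s →
      s * (2 * t) * ((n : ℝ) + 1 + t) ^ (-s - 1)
        ≤ ((n : ℝ) + 1 - t) ^ (-s) - ((n : ℝ) + 1 + t) ^ (-s) ∧
      ((n : ℝ) + 1 - t) ^ (-s) - ((n : ℝ) + 1 + t) ^ (-s)
        ≤ s * (2 * t) * ((n : ℝ) + 1 - t) ^ (-s - 1) := by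
    intro n s hs
    have hpos : (0 : ℝ) < (n : ℝ) + 1 - t := by
      have : (0:ℝ) ≤ (n:ℝ) := Nat.cast_nonneg n
      linarith
    have := mvt_rpow_bounds hpos (by linarith : (n : ℝ) + 1 - t < (n : ℝ) + 1 + t) hs
    have he : (n : ℝ) + 1 + t - ((n : ℝ) + 1 - t) = 2 * t := by ring
    rw [he] at this
    exact this
  have hsum1 : ∀ s : ℝ, 0 < s → Summable (fun n : ℕ => ((n : ℝ) + 1 - t) ^ (-s - 1)) := by
    intro s hs
    have := summable_shift_rpow (by linarith : (0:ℝ) < 1 - t) (by linarith : (1:ℝ) < s + 1)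
    refine this.congr fun n => ?_
    rw [show (n:ℝ) + 1 - t = (n:ℝ) + (1 - t) by ring, show -s - 1 = -(s + 1) by ring]
  have hsum2 : ∀ s : ℝ, 0 < s → Summable (fun n : ℕ => ((n : ℝ) + 1 + t) ^ (-s - 1)) := by
    intro s hs
    have := summable_shift_rpow (by linarith : (0:ℝ) < 1 + t) (by linarith : (1:ℝ) < s + 1)
    refine this.congr fun n => ?_
    rw [show (n:ℝ) + 1 + t = (n:ℝ) + (1 + t) by ring, show -s - 1 = -(s + 1) by ring]
  have hSummableAbs : ∀ s : ℝ, 0 < s →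
      Summable (fun n : ℕ => |((n : ℝ) + 1 + t) ^ (-s) - ((n : ℝ) + 1 - t) ^ (-s)|) := by
    intro s hs
    refine Summable.of_nonneg_of_le (fun n => abs_nonneg _) (fun n => ?_)
      (((hsum1 s hs).mul_left (s * (2 * t))))
    rw [habs n s hs]
    exact (hmvt n s hs).2
  refine ⟨hSummableAbs, ?_⟩
  -- squeeze for the limit
  have hT1 : Tendsto (fun s : ℝ => -(2 * t) * (s * ∑' n : ℕ, ((n : ℝ) + (1 - t)) ^ (-s - 1)))
      (𝓝[>] (0 : ℝ)) (𝓝 (-2 * t)) := by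
    have := (tendsto_sT (by linarith : (0:ℝ) < 1 - t)).const_mul (-(2 * t))
    simpa using this
  have hT2 : Tendsto (fun s : ℝ => -(2 * t) * (s * ∑' n : ℕ, ((n : ℝ) + (1 + t)) ^ (-s - 1)))
      (𝓝[>] (0 : ℝ)) (𝓝 (-2 * t)) := by
    have := (tendsto_sT (by linarith : (0:ℝ) < 1 + t)).const_mul (-(2 * t))
    simpa using this
  have hcongr1 : ∀ s : ℝ, (fun n : ℕ => ((n : ℝ) + (1 - t)) ^ (-s - 1))
      = fun n : ℕ => ((n : ℝ) + 1 - t) ^ (-s - 1) := by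
    intro s; funext n; congr 1; ring
  have hcongr2 : ∀ s : ℝ, (fun n : ℕ => ((n : ℝ) + (1 + t)) ^ (-s - 1))
      = fun n : ℕ => ((n : ℝ) + 1 + t) ^ (-s - 1) := by
    intro s; funext n; congr 1; ring
  refine tendsto_of_tendsto_of_tendsto_of_le_of_le' hT1 hT2 ?_ ?_
  · -- lower bound: S(s) ≥ -2t * s * Σ (n+1-t)^{-s-1}
    filter_upwards [self_mem_nhdsWithin] with s hs
    rw [hcongr1 s]
    have hgsum : Summable (fun n : ℕ =>
        ((n : ℝ) + 1 + t) ^ (-s) - ((n : ℝ) + 1 - t) ^ (-s)) :=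
      (hSummableAbs s hs).of_abs
    have hle : ∀ n : ℕ, -(s * (2 * t) * ((n : ℝ) + 1 - t) ^ (-s - 1))
        ≤ ((n : ℝ) + 1 + t) ^ (-s) - ((n : ℝ) + 1 - t) ^ (-s) := by
      intro n
      have := (hmvt n s hs).2
      linarith
    have := Summable.tsum_le_tsum hle (((hsum1 s hs).mul_left (s * (2 * t))).neg) hgsum
    rw [tsum_neg, tsum_mul_left] at this
    calc -(2 * t) * (s * ∑' n : ℕ, ((n : ℝ) + 1 - t) ^ (-s - 1))
        = -(s * (2 * t) * ∑' n : ℕ, ((n : ℝ) + 1 - t) ^ (-s - 1)) := by ring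
      _ ≤ _ := this
  · -- upper bound
    filter_upwards [self_mem_nhdsWithin] with s hs
    rw [hcongr2 s]
    have hgsum : Summable (fun n : ℕ =>
        ((n : ℝ) + 1 + t) ^ (-s) - ((n : ℝ) + 1 - t) ^ (-s)) :=
      (hSummableAbs s hs).of_abs
    have hle : ∀ n : ℕ, ((n : ℝ) + 1 + t) ^ (-s) - ((n : ℝ) + 1 - t) ^ (-s)
        ≤ -(s * (2 * t) * ((n : ℝ) + 1 + t) ^ (-s - 1)) := by
      intro n
      have := (hmvt n s hs).1
      linarith
    have := Summable.tsum_le_tsum hle hgsum (((hsum2 s hs).mul_left (s * (2 * t))).neg)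
    rw [tsum_neg, tsum_mul_left] at this
    calc ∑' n : ℕ, (((n : ℝ) + 1 + t) ^ (-s) - ((n : ℝ) + 1 - t) ^ (-s))
        ≤ -(s * (2 * t) * ∑' n : ℕ, ((n : ℝ) + 1 + t) ^ (-s - 1)) := this
      _ = -(2 * t) * (s * ∑' n : ℕ, ((n : ℝ) + 1 + t) ^ (-s - 1)) := by ring
end

section
/- Suppose {A_τ}_{τ∈[0,1]} is a family for which a partition 0 = τ₀ < τ₁ < ... < τ_N = 1 and weights λ₀ = λ_N = 0, λ₁,...,λ_{N−1} are chosen, and define sf = Σ_{i=1}^{N−1} ind(Π_{λ_i}(A_{τ_i}), Π_{λ_{i−1}}(A_{τ_i})). In the model situation where each A_τ is a self-adjoint endomorphism of a fixed finite-dimensional space and λ is never an eigenvalue of A_τ on the relevant subinterval, prove that sf is independent of the choice of admissible partition and weights; equivalently, refining a partition by adding one point τ' ∈ (τ_i, τ_{i+1}) with the same weight λ_i on both new subintervals does not change the sum, and changing a weight λ_i to λ_i' (both admissible on [τ_i, τ_{i+1}]) changes two consecutive terms by amounts that cancel. -/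
noncomputable section

variable {E : Type*} [NormedAddCommGroup E] [InnerProductSpace ℂ E] [FiniteDimensional ℂ E]

/-- The spectral subspace of a self-adjoint endomorphism `A` spanned by the eigenvectors
with eigenvalue in `[a, b)`. -/
def spectralSubspace (A : E →ₗ[ℂ] E) (a b : ℝ) : Submodule ℂ E :=
  ⨆ μ ∈ {μ : ℝ | a ≤ μ ∧ μ < b}, Module.End.eigenspace A (μ : ℂ)

/-- The relative index `ind(Π_λ(A), Π_μ(A)) = sgn(μ−λ)·dim Λ_{λ,μ}` of the spectral
projections of `A` onto eigenvalues `≥ λ` resp. `≥ μ`; here `Λ_{λ,μ}` is the spectral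
subspace for eigenvalues in `[min(λ,μ), max(λ,μ))`.  (Exactly one of the two summands
below is nonzero, according to the sign of `μ − λ`.) -/
def relativeIndex (A : E →ₗ[ℂ] E) (lam mu : ℝ) : ℤ :=
  (Module.finrank ℂ (spectralSubspace A lam mu) : ℤ) -
    (Module.finrank ℂ (spectralSubspace A mu lam) : ℤ)

/-- The spectral flow of a family associated with a partition
`0 = τ₀ < … < τ_N = 1` and weights `λ₀, …, λ_{N−1}`:
`sf = Σ_{i=1}^{N−1} ind(Π_{λ_i}(A_{τ_i}), Π_{λ_{i−1}}(A_{τ_i}))`. -/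
def spectralFlowSum (A : ℝ → (E →L[ℂ] E)) (N : ℕ) (τ lam : ℕ → ℝ) : ℤ :=
  ∑ i ∈ Finset.Ico 1 N, relativeIndex (↑(A (τ i)) : E →ₗ[ℂ] E) (lam i) (lam (i - 1))

/-- A partition `τ` with weights `lam` is admissible for the family `A` if `τ` is a strictly
increasing partition of `[0,1]`, the boundary weights vanish, and on each subinterval
`[τ_i, τ_{i+1}]` the weight `λ_i` is never an eigenvalue of `A_τ`. -/
def AdmissiblePartition (A : ℝ → (E →L[ℂ] E)) (N : ℕ) (τ lam : ℕ → ℝ) : Prop :=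
  τ 0 = 0 ∧ τ N = 1 ∧ (∀ i < N, τ i < τ (i + 1)) ∧ lam 0 = 0 ∧ lam (N - 1) = 0 ∧
    ∀ i < N, ∀ t ∈ Set.Icc (τ i) (τ (i + 1)),
      ¬ Module.End.HasEigenvalue (↑(A t) : E →ₗ[ℂ] E) (lam i : ℂ)

/- ### Auxiliary development -/

namespace SpecFlowAux

open Module LinearMap
open scoped Classical

variable {T T' : E →ₗ[ℂ] E}

/-- The number of eigenvalues (with multiplicity) of `T` lying in `S`. -/
def count (hT : T.IsSymmetric) (S : Set ℝ) : ℕ :=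
  (Finset.univ.filter fun i : Fin (finrank ℂ E) => hT.eigenvalues rfl i ∈ S).card

/-- Membership in a spectral subspace, characterized by vanishing of eigenbasis
coordinates. -/
lemma mem_iSup_iff (hT : T.IsSymmetric) (S : Set ℝ) (x : E) :
    x ∈ (⨆ μ ∈ S, Module.End.eigenspace T (μ : ℂ)) ↔
      ∀ i, hT.eigenvalues rfl i ∉ S → (hT.eigenvectorBasis rfl).repr x i = 0 := by
  constructor
  · intro hx
    rw [iSup_subtype'] at hx
    induction hx using Submodule.iSup_induction' with
    | mem μ x hx =>
      intro i hi
      have h1 : (hT.eigenvectorBasis rfl).repr (T x) i =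
          (hT.eigenvalues rfl i : ℂ) * (hT.eigenvectorBasis rfl).repr x i :=
        hT.eigenvectorBasis_apply_self_apply rfl x i
      have hTx : T x = ((μ : ℝ) : ℂ) • x := Module.End.mem_eigenspace_iff.mp hx
      have h2 : (hT.eigenvectorBasis rfl).repr (T x) i =
          ((μ : ℝ) : ℂ) * (hT.eigenvectorBasis rfl).repr x i := by
        rw [hTx, map_smul]; rfl
      have h3 : ((hT.eigenvalues rfl i : ℂ) - ((μ : ℝ) : ℂ)) *
          (hT.eigenvectorBasis rfl).repr x i = 0 := by
        rw [sub_mul, h1.symm.trans h2, sub_self]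
      rcases mul_eq_zero.mp h3 with h | h
      · exfalso
        have : hT.eigenvalues rfl i = (μ : ℝ) := by
          exact_mod_cast sub_eq_zero.mp h
        exact hi (this ▸ μ.2)
      · exact h
    | zero => intro i _; simp
    | add x y _ _ hx hy =>
      intro i hi
      rw [map_add]
      have := hx i hi
      have := hy i hi
      simp only [PiLp.add_apply] at *
      simp [*]
  · intro h
    have hx := (hT.eigenvectorBasis rfl).sum_repr x
    rw [← hx]
    refine Submodule.sum_mem _ fun i _ => ?_
    by_cases hi : hT.eigenvalues rfl i ∈ S
    · refine Submodule.smul_mem _ _ ?_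
      have hb : (hT.eigenvectorBasis rfl) i ∈
          Module.End.eigenspace T ((hT.eigenvalues rfl i : ℝ) : ℂ) :=
        (hT.hasEigenvector_eigenvectorBasis rfl i).1
      exact Submodule.mem_iSup_of_mem _ (Submodule.mem_iSup_of_mem hi hb)
    · rw [h i hi, zero_smul]; exact Submodule.zero_mem _

/-- The dimension of a spectral subspace equals the eigenvalue count. -/
lemma finrank_iSup (hT : T.IsSymmetric) (S : Set ℝ) :
    finrank ℂ ((⨆ μ ∈ S, Module.End.eigenspace T (μ : ℂ)) : Submodule ℂ E) = count hT S := by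
  set b := hT.eigenvectorBasis (rfl : finrank ℂ E = _) with hb
  have hspan : (⨆ μ ∈ S, Module.End.eigenspace T (μ : ℂ)) =
      Submodule.span ℂ (Set.range fun i : {i : Fin (finrank ℂ E) // hT.eigenvalues rfl i ∈ S} =>
        b (i : Fin (finrank ℂ E))) := by
    apply le_antisymm
    · intro x hx
      rw [mem_iSup_iff hT S x] at hx
      rw [← b.sum_repr x]
      refine Submodule.sum_mem _ fun i _ => ?_
      by_cases hi : hT.eigenvalues rfl i ∈ S
      · exact Submodule.smul_mem _ _ (Submodule.subset_span ⟨⟨i, hi⟩, rfl⟩)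
      · rw [hx i hi, zero_smul]; exact Submodule.zero_mem _
    · rw [Submodule.span_le]
      rintro - ⟨i, rfl⟩
      exact Submodule.mem_iSup_of_mem _ (Submodule.mem_iSup_of_mem i.2
        (hT.hasEigenvector_eigenvectorBasis rfl i.1).1)
  have hli : LinearIndependent ℂ
      (fun i : {i : Fin (finrank ℂ E) // hT.eigenvalues rfl i ∈ S} =>
        b (i : Fin (finrank ℂ E))) :=
    (b.orthonormal.comp _ Subtype.val_injective).linearIndependent
  rw [hspan, finrank_span_eq_card hli, count, Fintype.card_subtype]

lemma norm_sq_eq_sum (hT : T.IsSymmetric) (x : E) :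
    ‖x‖ ^ 2 = ∑ i, ‖(hT.eigenvectorBasis rfl).repr x i‖ ^ 2 := by
  set b := hT.eigenvectorBasis (rfl : finrank ℂ E = _)
  rw [← b.repr.norm_map x, EuclideanSpace.norm_eq, Real.sq_sqrt]
  exact Finset.sum_nonneg fun i _ => sq_nonneg _

lemma re_inner_eq_sum (hT : T.IsSymmetric) (x : E) :
    (inner ℂ x (T x) : ℂ).re =
      ∑ i, hT.eigenvalues rfl i * ‖(hT.eigenvectorBasis rfl).repr x i‖ ^ 2 := by
  set b := hT.eigenvectorBasis (rfl : finrank ℂ E = _) with hb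
  have h := b.sum_inner_mul_inner x (T x)
  have heach : ∀ i, (inner ℂ x (b i) : ℂ) * (inner ℂ (b i) (T x) : ℂ) =
      ((hT.eigenvalues rfl i * ‖b.repr x i‖ ^ 2 : ℝ) : ℂ) := by
    intro i
    have h1 : (inner ℂ (b i) (T x) : ℂ) = (hT.eigenvalues rfl i : ℂ) * b.repr x i := by
      rw [← b.repr_apply_apply (T x) i]
      exact hT.eigenvectorBasis_apply_self_apply rfl x i
    have h2 : (inner ℂ x (b i) : ℂ) = (starRingEnd ℂ) (b.repr x i) := by
      rw [← inner_conj_symm, b.repr_apply_apply]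
    rw [h1, h2, mul_comm ((hT.eigenvalues rfl i : ℂ)) _, ← mul_assoc, RCLike.conj_mul]
    push_cast
    exact mul_comm _ _
  rw [← h]
  rw [Finset.sum_congr rfl fun i _ => heach i]
  rw [← Complex.ofReal_sum]
  exact Complex.ofReal_re _

lemma quad_ge (hT : T.IsSymmetric) {S : Set ℝ} {x : E} {c : ℝ}
    (hx : x ∈ (⨆ μ ∈ S, Module.End.eigenspace T (μ : ℂ)))
    (h : ∀ i, hT.eigenvalues rfl i ∈ S → c ≤ hT.eigenvalues rfl i) :
    c * ‖x‖ ^ 2 ≤ (inner ℂ x (T x) : ℂ).re := by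
  rw [re_inner_eq_sum hT, norm_sq_eq_sum hT, Finset.mul_sum]
  refine Finset.sum_le_sum fun i _ => ?_
  by_cases hzero : (hT.eigenvectorBasis rfl).repr x i = 0
  · simp [hzero]
  · have hmem : hT.eigenvalues rfl i ∈ S := by
      by_contra hc
      exact hzero ((mem_iSup_iff hT S x).mp hx i hc)
    exact mul_le_mul_of_nonneg_right (h i hmem) (sq_nonneg _)

lemma quad_le (hT : T.IsSymmetric) {S : Set ℝ} {x : E} {c : ℝ}
    (hx : x ∈ (⨆ μ ∈ S, Module.End.eigenspace T (μ : ℂ)))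
    (h : ∀ i, hT.eigenvalues rfl i ∈ S → hT.eigenvalues rfl i ≤ c) :
    (inner ℂ x (T x) : ℂ).re ≤ c * ‖x‖ ^ 2 := by
  rw [re_inner_eq_sum hT, norm_sq_eq_sum hT, Finset.mul_sum]
  refine Finset.sum_le_sum fun i _ => ?_
  by_cases hzero : (hT.eigenvectorBasis rfl).repr x i = 0
  · simp [hzero]
  · have hmem : hT.eigenvalues rfl i ∈ S := by
      by_contra hc
      exact hzero ((mem_iSup_iff hT S x).mp hx i hc)
    exact mul_le_mul_of_nonneg_right (h i hmem) (sq_nonneg _)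

/-- The number of eigenvalues `≥ lam`, counted with multiplicity. -/
def natN (hT : T.IsSymmetric) (lam : ℝ) : ℕ := count hT (Set.Ici lam)

lemma count_Iio (hT : T.IsSymmetric) (lam : ℝ) :
    count hT (Set.Iio lam) = finrank ℂ E - natN hT lam := by
  have h : count hT (Set.Iio lam) + natN hT lam = finrank ℂ E := by
    rw [count, natN, count]
    have : ∀ i : Fin (finrank ℂ E), hT.eigenvalues rfl i ∈ Set.Iio lam ↔
        ¬ (hT.eigenvalues rfl i ∈ Set.Ici lam) := by
      intro i; simp only [Set.mem_Iio, Set.mem_Ici]; exact lt_iff_not_ge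
    rw [Finset.filter_congr (fun i _ => by rw [this i]), add_comm]
    convert (Finset.card_filter_add_card_filter_not (s := (Finset.univ : Finset (Fin (finrank ℂ E))))
        (p := fun i => hT.eigenvalues rfl i ∈ Set.Ici lam)).trans
      (Finset.card_univ.trans (Fintype.card_fin _))
  omega

lemma natN_le_of_disjoint (hT : T.IsSymmetric) (hT' : T'.IsSymmetric) (lam : ℝ)
    (h : Disjoint (⨆ μ ∈ Set.Ici lam, Module.End.eigenspace T (μ : ℂ))
      (⨆ μ ∈ Set.Iio lam, Module.End.eigenspace T' (μ : ℂ))) :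
    natN hT lam ≤ natN hT' lam := by
  set V := (⨆ μ ∈ Set.Ici lam, Module.End.eigenspace T (μ : ℂ))
  set W := (⨆ μ ∈ Set.Iio lam, Module.End.eigenspace T' (μ : ℂ))
  have h1 : finrank ℂ V + finrank ℂ W = finrank ℂ (V ⊔ W : Submodule ℂ E) := by
    rw [← Submodule.finrank_sup_add_finrank_inf_eq V W, disjoint_iff.mp h]
    simp
  have h2 : finrank ℂ (V ⊔ W : Submodule ℂ E) ≤ finrank ℂ E := Submodule.finrank_le _
  have h3 : finrank ℂ V = natN hT lam := finrank_iSup hT _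
  have h4 : finrank ℂ W = finrank ℂ E - natN hT' lam := by
    rw [finrank_iSup hT' _, count_Iio]
  have h5 : natN hT' lam ≤ finrank ℂ E := by
    rw [natN, count]
    exact le_trans (Finset.card_filter_le _ _) (by simp)
  omega

lemma gap (hT : T.IsSymmetric) (lam : ℝ)
    (h : ¬ Module.End.HasEigenvalue T (lam : ℂ)) :
    ∃ δ > 0, ∀ i : Fin (finrank ℂ E), δ ≤ |hT.eigenvalues rfl i - lam| := by
  have hne : ∀ i : Fin (finrank ℂ E), hT.eigenvalues rfl i ≠ lam := by
    intro i hi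
    exact h (by rw [← hi]; exact hT.hasEigenvalue_eigenvalues rfl i)
  by_cases hU : (Finset.univ : Finset (Fin (finrank ℂ E))).Nonempty
  · refine ⟨Finset.univ.inf' hU fun i => |hT.eigenvalues rfl i - lam|, ?_, ?_⟩
    · rw [gt_iff_lt, Finset.lt_inf'_iff]
      intro i _
      exact abs_pos.mpr (sub_ne_zero.mpr (hne i))
    · intro i
      exact Finset.inf'_le _ (Finset.mem_univ i)
  · exact ⟨1, one_pos, fun i => absurd ⟨i, Finset.mem_univ i⟩ hU⟩

lemma re_inner_diff_le (B C : E →L[ℂ] E) (x : E) :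
    |(inner ℂ x ((↑B : E →ₗ[ℂ] E) x) : ℂ).re - (inner ℂ x ((↑C : E →ₗ[ℂ] E) x) : ℂ).re|
      ≤ ‖B - C‖ * ‖x‖ ^ 2 := by
  have h1 : (inner ℂ x ((↑B : E →ₗ[ℂ] E) x) : ℂ).re - (inner ℂ x ((↑C : E →ₗ[ℂ] E) x) : ℂ).re
      = (inner ℂ x ((B - C) x) : ℂ).re := by
    rw [ContinuousLinearMap.sub_apply, inner_sub_right]
    simp
  rw [h1]
  calc |(inner ℂ x ((B - C) x) : ℂ).re| ≤ ‖(inner ℂ x ((B - C) x) : ℂ)‖ :=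
        Complex.abs_re_le_norm _
    _ ≤ ‖x‖ * ‖(B - C) x‖ := by
        exact norm_inner_le_norm _ _
    _ ≤ ‖x‖ * (‖B - C‖ * ‖x‖) := by
        exact mul_le_mul_of_nonneg_left ((B - C).le_opNorm x) (norm_nonneg x)
    _ = ‖B - C‖ * ‖x‖ ^ 2 := by ring

lemma natN_eventuallyEq (A : ℝ → (E →L[ℂ] E)) (hA : Continuous A)
    (hsa : ∀ t : ℝ, (↑(A t) : E →ₗ[ℂ] E).IsSymmetric) (lam s0 : ℝ)
    (h0 : ¬ Module.End.HasEigenvalue (↑(A s0) : E →ₗ[ℂ] E) (lam : ℂ)) :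
    ∀ᶠ s in nhds s0, natN (hsa s) lam = natN (hsa s0) lam := by
  obtain ⟨δ, hδ, hgap⟩ := gap (hsa s0) lam h0
  have hev : ∀ᶠ s in nhds s0, dist (A s) (A s0) < δ :=
    Metric.tendsto_nhds.mp (hA.tendsto s0) δ hδ
  filter_upwards [hev] with s hs
  rw [dist_eq_norm] at hs
  have key : ∀ x : E, |(inner ℂ x ((↑(A s) : E →ₗ[ℂ] E) x) : ℂ).re
      - (inner ℂ x ((↑(A s0) : E →ₗ[ℂ] E) x) : ℂ).re| ≤ ‖A s - A s0‖ * ‖x‖ ^ 2 :=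
    re_inner_diff_le (A s) (A s0)
  refine le_antisymm ?_ ?_
  · refine natN_le_of_disjoint (hsa s) (hsa s0) lam ?_
    rw [Submodule.disjoint_def]
    intro x hxV hxW
    by_contra hx0
    have hpos : 0 < ‖x‖ ^ 2 := pow_pos (norm_pos_iff.mpr hx0) 2
    have h1 : lam * ‖x‖ ^ 2 ≤ (inner ℂ x ((↑(A s) : E →ₗ[ℂ] E) x) : ℂ).re :=
      quad_ge (hsa s) hxV (fun i hi => hi)
    have h2 : (inner ℂ x ((↑(A s0) : E →ₗ[ℂ] E) x) : ℂ).re ≤ (lam - δ) * ‖x‖ ^ 2 := by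
      refine quad_le (hsa s0) hxW (fun i hi => ?_)
      have := hgap i
      have hlt : (hsa s0).eigenvalues rfl i < lam := hi
      have habs : δ ≤ lam - (hsa s0).eigenvalues rfl i := by
        rcases abs_cases ((hsa s0).eigenvalues rfl i - lam) with ⟨he, _⟩ | ⟨he, _⟩ <;> linarith
      linarith
    have h3 := key x
    rw [abs_le] at h3
    nlinarith [hs, hpos]
  · refine natN_le_of_disjoint (hsa s0) (hsa s) lam ?_
    rw [Submodule.disjoint_def]
    intro x hxV hxW
    by_contra hx0
    have hpos : 0 < ‖x‖ ^ 2 := pow_pos (norm_pos_iff.mpr hx0) 2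
    have h1 : (lam + δ) * ‖x‖ ^ 2 ≤ (inner ℂ x ((↑(A s0) : E →ₗ[ℂ] E) x) : ℂ).re := by
      refine quad_ge (hsa s0) hxV (fun i hi => ?_)
      have := hgap i
      have hge : lam ≤ (hsa s0).eigenvalues rfl i := hi
      rcases abs_cases ((hsa s0).eigenvalues rfl i - lam) with ⟨he, _⟩ | ⟨he, _⟩ <;> linarith
    have h2 : (inner ℂ x ((↑(A s) : E →ₗ[ℂ] E) x) : ℂ).re ≤ lam * ‖x‖ ^ 2 :=
      quad_le (hsa s) hxW (fun i hi => le_of_lt hi)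
    have h3 := key x
    rw [abs_le] at h3
    nlinarith [hs, hpos]

lemma natN_const_on_Icc (A : ℝ → (E →L[ℂ] E)) (hA : Continuous A)
    (hsa : ∀ t : ℝ, (↑(A t) : E →ₗ[ℂ] E).IsSymmetric) (lam a b : ℝ) (hab : a ≤ b)
    (h : ∀ t ∈ Set.Icc a b, ¬ Module.End.HasEigenvalue (↑(A t) : E →ₗ[ℂ] E) (lam : ℂ)) :
    natN (hsa a) lam = natN (hsa b) lam := by
  set g : ℝ → ℝ := fun s => max a (min b s) with hgdef
  have hg : Continuous g := continuous_const.max (continuous_const.min continuous_id)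
  have hmem : ∀ s, g s ∈ Set.Icc a b := fun s =>
    ⟨le_max_left _ _, max_le hab (min_le_left _ _)⟩
  have hloc : IsLocallyConstant (fun s => natN (hsa (g s)) lam) := by
    rw [IsLocallyConstant.iff_eventually_eq]
    intro s
    exact (hg.tendsto s).eventually (natN_eventuallyEq A hA hsa lam (g s) (h _ (hmem s)))
  have hconst := hloc.apply_eq_of_isPreconnected isPreconnected_univ
    (Set.mem_univ a) (Set.mem_univ b)
  have hga : g a = a := by simp [hgdef, min_eq_right hab]
  have hgb : g b = b := by simp [hgdef, max_eq_right hab]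
  rw [hga, hgb] at hconst
  exact hconst

lemma ind_helper (x lam mu : ℝ) :
    ((if lam ≤ x ∧ x < mu then (1:ℤ) else 0) - (if mu ≤ x ∧ x < lam then 1 else 0))
      = (if lam ≤ x then 1 else 0) - (if mu ≤ x then 1 else 0) := by
  rcases le_or_gt lam x with h1 | h1 <;> rcases le_or_gt mu x with h2 | h2
  · simp [h1, h2, not_lt.mpr h2, not_lt.mpr h1]
  · simp [h1, h2, not_le.mpr h2]
  · simp [h1, h2, not_le.mpr h1]
  · simp [not_le.mpr h1, not_le.mpr h2]

lemma relativeIndex_eq (hT : T.IsSymmetric) (lam mu : ℝ) :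
    relativeIndex T lam mu = (natN hT lam : ℤ) - (natN hT mu : ℤ) := by
  have hIco : ∀ a b : ℝ, spectralSubspace T a b
      = ⨆ μ ∈ {μ : ℝ | a ≤ μ ∧ μ < b}, Module.End.eigenspace T (μ : ℂ) := fun _ _ => rfl
  rw [relativeIndex, hIco, hIco, finrank_iSup hT, finrank_iSup hT]
  rw [natN, natN, count, count, count, count]
  rw [Finset.card_filter, Finset.card_filter, Finset.card_filter, Finset.card_filter]
  push_cast
  rw [← Finset.sum_sub_distrib, ← Finset.sum_sub_distrib]
  refine Finset.sum_congr rfl fun i _ => ?_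
  simp only [Set.mem_setOf_eq, Set.mem_Ici]
  exact ind_helper _ _ _

end SpecFlowAux

open SpecFlowAux in
/-- For a continuous family of self-adjoint endomorphisms of a fixed
finite-dimensional space, the spectral flow sum
`sf = Σ_{i=1}^{N−1} ind(Π_{λ_i}(A_{τ_i}), Π_{λ_{i−1}}(A_{τ_i}))` does not depend on the
choice of admissible partition and weights: any two admissible choices give the same sum
(in particular, refining the partition by one point with the same weight on both new
subintervals, or changing one admissible weight, does not change the sum). -/
theorem spectralFlowSum_independent_of_partition
    (A : ℝ → (E →L[ℂ] E)) (hA : Continuous A)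
    (hsa : ∀ t : ℝ, (↑(A t) : E →ₗ[ℂ] E).IsSymmetric)
    (N M : ℕ) (hN : 0 < N) (hM : 0 < M)
    (τ lam τ' lam' : ℕ → ℝ)
    (h₁ : AdmissiblePartition A N τ lam)
    (h₂ : AdmissiblePartition A M τ' lam') :
    spectralFlowSum A N τ lam = spectralFlowSum A M τ' lam' := by
  suffices h : ∀ (N : ℕ) (τ lam : ℕ → ℝ), 0 < N → AdmissiblePartition A N τ lam →
      spectralFlowSum A N τ lam
        = (natN (hsa 1) (0 : ℝ) : ℤ) - (natN (hsa 0) (0 : ℝ) : ℤ) by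
    rw [h N τ lam hN h₁, h M τ' lam' hM h₂]
  clear hN hM h₁ h₂ N M τ lam τ' lam'
  intro N τ lam hN h
  obtain ⟨hτ0, hτN, hmono, hlam0, hlamN, hadm⟩ := h
  set g : ℕ → ℤ := fun j => (natN (hsa (τ j)) (lam j) : ℤ) with hg
  have hstep : ∀ i ∈ Finset.Ico 1 N,
      relativeIndex (↑(A (τ i)) : E →ₗ[ℂ] E) (lam i) (lam (i - 1)) = g i - g (i - 1) := by
    intro i hi
    rw [Finset.mem_Ico] at hi
    rw [relativeIndex_eq (hsa (τ i))]
    have hi1 : i - 1 + 1 = i := by omega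
    have hconst : natN (hsa (τ (i - 1))) (lam (i - 1)) = natN (hsa (τ i)) (lam (i - 1)) := by
      have hadm' := hadm (i - 1) (by omega)
      rw [hi1] at hadm'
      have hle : τ (i - 1) ≤ τ i := by
        have := hmono (i - 1) (by omega)
        rw [hi1] at this
        exact this.le
      exact natN_const_on_Icc A hA hsa (lam (i - 1)) (τ (i - 1)) (τ i) hle hadm'
    rw [← hconst]
  rw [spectralFlowSum, Finset.sum_congr rfl hstep]
  have htel : ∑ i ∈ Finset.Ico 1 N, (g i - g (i - 1)) = g (N - 1) - g 0 := by
    rw [Finset.sum_Ico_eq_sum_range]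
    have hterm : ∀ j, g (1 + j) - g (1 + j - 1) = g (j + 1) - g j := by
      intro j; congr 2 <;> omega
    rw [Finset.sum_congr rfl fun j _ => hterm j, Finset.sum_range_sub g]
  rw [htel]
  have hg0 : g 0 = (natN (hsa 0) (0 : ℝ) : ℤ) := by
    rw [hg]; simp only [hτ0, hlam0]
  have hgN : g (N - 1) = (natN (hsa 1) (0 : ℝ) : ℤ) := by
    rw [hg]
    simp only [hlamN]
    have hN1 : N - 1 + 1 = N := by omega
    have hadm' := hadm (N - 1) (by omega)
    rw [hN1] at hadm'
    rw [hlamN] at hadm'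
    have hle : τ (N - 1) ≤ τ N := by
      have := hmono (N - 1) (by omega)
      rw [hN1] at this
      exact this.le
    have := natN_const_on_Icc A hA hsa (0 : ℝ) (τ (N - 1)) (τ N) hle hadm'
    rw [this, hτN]
  rw [hg0, hgN]

end
end
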